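/- arXiv:1910.09673 — 4 statements merged into one kernel-verified Lean document; each statement's English description precedes it below -/
import Mathlib

section
/- For any q > 1 and any positive increasing sequence (M_j)_{j≥1} of real numbers, the liminf as j → ∞ of j·(M_j - M_{j-1})/M_j^q equals 0. -/
/-!
By Bernoulli's inequality for the negative exponent `1 - q`, i.e. the tangent line of the convex
function `x ↦ x ^ (1 - q)` at `M j`,
`(q - 1) (M j - M (j - 1)) / M j ^ q ≤ M (j - 1) ^ (1 - q) - M j ^ (1 - q)`,
so the nonnegative series `∑ (M j - M (j - 1)) / M j ^ q` telescopes to a bounded sum and converges.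
If `j (M j - M (j - 1)) / M j ^ q` stayed above some `ε > 0`, its terms would dominate `ε / j`,
contradicting the divergence of the harmonic series.
-/

open Filter

theorem one_add_mul_sub_one_le_rpow_of_nonpos {t p : ℝ} (ht : 0 < t) (hp : p ≤ 0) :
    1 + p * (t - 1) ≤ t ^ p := by
  -- Bernoulli's inequality for `t⁻¹` and the exponent `1 - p ≥ 1`, multiplied by `t`.
  have hs : -1 ≤ t⁻¹ - 1 := by linarith [inv_pos.mpr ht]
  have key := one_add_mul_self_le_rpow_one_add hs (p := 1 - p) (by linarith)
  rw [add_sub_cancel, Real.inv_rpow ht.le, ← Real.rpow_neg ht.le, neg_sub,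
    Real.rpow_sub ht, Real.rpow_one] at key
  have := (le_div_iff₀ ht).mp key
  field_simp at this
  nlinarith

theorem mul_sub_div_rpow_le_rpow_sub_rpow {q a b : ℝ} (hq : 1 ≤ q) (ha : 0 < a) (hb : 0 < b) :
    (q - 1) * ((b - a) / b ^ q) ≤ a ^ (1 - q) - b ^ (1 - q) := by
  have key := one_add_mul_sub_one_le_rpow_of_nonpos (div_pos ha hb) (p := 1 - q) (by linarith)
  rw [Real.div_rpow ha.le hb.le, le_div_iff₀ (Real.rpow_pos_of_pos hb _),
    Real.rpow_sub hb, Real.rpow_one] at key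
  have hsplit : (q - 1) * ((b - a) / b ^ q) + b ^ (1 - q) =
      (1 + (1 - q) * (a / b - 1)) * (b / b ^ q) := by
    rw [Real.rpow_sub hb, Real.rpow_one]
    field_simp
    ring
  linarith

theorem summable_of_le_sub_succ {a b : ℕ → ℝ} (ha : ∀ n, 0 ≤ a n) (hb : ∀ n, 0 ≤ b n)
    (hab : ∀ n, a n ≤ b n - b (n + 1)) : Summable a := by
  refine summable_of_sum_range_le ha (c := b 0) fun n => ?_
  calc ∑ i ∈ Finset.range n, a i ≤ ∑ i ∈ Finset.range n, (b i - b (i + 1)) :=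
        Finset.sum_le_sum fun i _ => hab i
    _ = b 0 - b n := Finset.sum_range_sub' b n
    _ ≤ b 0 := sub_le_self _ (hb n)

theorem frequently_natCast_mul_le_of_summable {a : ℕ → ℝ} (hs : Summable a) {ε : ℝ}
    (hε : 0 < ε) : ∃ᶠ n in atTop, n * a n ≤ ε := by
  refine fun hlarge => Real.not_summable_one_div_natCast ?_
  refine .of_norm_bounded_eventually_nat (hs.mul_left ε⁻¹) ?_
  filter_upwards [hlarge, eventually_gt_atTop 0] with n hn hn0
  have hn0' : (0 : ℝ) < n := by exact_mod_cast hn0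
  rw [Real.norm_eq_abs, abs_of_pos (by positivity), div_le_iff₀ hn0']
  rw [not_le] at hn
  calc 1 = ε⁻¹ * ε := (inv_mul_cancel₀ hε.ne').symm
    _ ≤ ε⁻¹ * a n * n := by rw [mul_assoc, mul_comm (a n)]; gcongr

theorem liminf_eq_zero_of_frequently_le {ι : Type*} {l : Filter ι} {u : ι → ℝ}
    (h0 : ∀ᶠ n in l, 0 ≤ u n) (hsmall : ∀ ε > 0, ∃ᶠ n in l, u n ≤ ε) : liminf u l = 0 := by
  have hbdd : IsBoundedUnder (· ≥ ·) l u := isBoundedUnder_of_eventually_ge h0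
  refine le_antisymm (le_of_forall_pos_le_add fun ε hε => ?_) ?_
  · rw [zero_add]
    exact liminf_le_of_frequently_le (hsmall ε hε) hbdd
  · exact le_liminf_of_le (.of_frequently_le (hsmall 1 one_pos)) h0

theorem liminf_natCast_mul_eq_zero_of_summable {a : ℕ → ℝ} (h0 : ∀ᶠ n in atTop, 0 ≤ a n)
    (hs : Summable a) : liminf (fun n : ℕ => n * a n) atTop = 0 :=
  liminf_eq_zero_of_frequently_le (h0.mono fun n hn => by positivity)
    fun _ hε => frequently_natCast_mul_le_of_summable hs hε

theorem summable_sub_div_rpow {q : ℝ} (hq : 1 < q) {M : ℕ → ℝ} (hpos : ∀ j, 1 ≤ j → 0 < M j)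
    (hmono : ∀ j, 2 ≤ j → M (j - 1) ≤ M j) :
    Summable fun j => (M j - M (j - 1)) / M j ^ q := by
  rw [← summable_nat_add_iff 2, ← summable_mul_left_iff (sub_ne_zero.mpr hq.ne')]
  refine summable_of_le_sub_succ (b := fun n => M (n + 1) ^ (1 - q)) (fun n => ?_)
    (fun n => (Real.rpow_pos_of_pos (hpos _ n.succ_pos) _).le) (fun n => ?_)
  · have hM := hpos (n + 2) (by omega)
    have := sub_nonneg.mpr (hmono (n + 2) (by omega))
    exact mul_nonneg (by linarith) (by positivity)
  · exact mul_sub_div_rpow_le_rpow_sub_rpow hq.le (hpos (n + 1) n.succ_pos)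
      (hpos (n + 2) (by omega))

theorem liminf_j_mul_growth_rate_eq_zero
    (q : ℝ) (hq : 1 < q) (M : ℕ → ℝ)
    (hpos : ∀ j, 1 ≤ j → 0 < M j)
    (hmono : ∀ j, 2 ≤ j → M (j - 1) ≤ M j) :
    Filter.liminf (fun j : ℕ => (j : ℝ) * (M j - M (j - 1)) / (M j) ^ q) atTop = 0 := by
  have h0 : ∀ᶠ j in atTop, 0 ≤ (M j - M (j - 1)) / M j ^ q :=
    eventually_atTop.mpr ⟨2, fun j hj =>
      div_nonneg (sub_nonneg.mpr (hmono j hj)) (Real.rpow_nonneg (hpos j (by omega)).le q)⟩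
  simpa only [mul_div_assoc] using
    liminf_natCast_mul_eq_zero_of_summable h0 (summable_sub_div_rpow hq hpos hmono)
end

section
/- If q > 1, ε > 0, N ≥ 1, and (M_j)_{j≥1} is a positive increasing sequence satisfying j(M_j - M_{j-1}) ≥ ε M_j^q for all j ≥ N, then sup_j M_j = ∞, i.e., the sequence is unbounded. -/
/-! Monotonicity gives `M j ≥ M N` for `j ≥ N`, so the growth condition forces increments
`M (j+1) - M j ≥ c / (j+1)` with `c = ε * M N ^ q > 0`. Summing them, `M` grows at least like `c`
times the harmonic series, which diverges. -/

open Filter Finset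

theorem tendsto_atTop_of_le_sub_succ {u : ℕ → ℝ} {c : ℝ} {N : ℕ} (hc : 0 < c)
    (h : ∀ n ≥ N, c / (n + 1) ≤ u (n + 1) - u n) : Tendsto u atTop atTop := by
  set H : ℕ → ℝ := fun n => ∑ k ∈ range n, 1 / ((k : ℝ) + 1)
  -- `u - c * H` is monotone from `N` on, so `u` stays above a shift of `c * H`.
  have hmono : MonotoneOn (fun n => u n - c * H n) (Set.Ici N) := by
    refine monotoneOn_nat_Ici_of_le_succ fun n hn => ?_
    have := h n hn
    simp only [H, sum_range_succ, mul_add, mul_one_div]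
    linarith
  have hH : Tendsto (fun n => u N - c * H N + c * H n) atTop atTop :=
    tendsto_atTop_add_const_left _ _
      (Real.tendsto_sum_range_one_div_nat_succ_atTop.const_mul_atTop hc)
  refine tendsto_atTop_mono' _ ?_ hH
  filter_upwards [eventually_ge_atTop N] with n hn
  have := hmono (Set.mem_Ici.2 le_rfl) (Set.mem_Ici.2 hn) hn
  linarith

theorem unbounded_of_growth_lower_bound
    (q ε : ℝ) (hq : 1 < q) (hε : 0 < ε) (N : ℕ) (hN : 1 ≤ N)
    (M : ℕ → ℝ)
    (hpos : ∀ j, 1 ≤ j → 0 < M j)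
    (hmono : ∀ j, 2 ≤ j → M (j - 1) ≤ M j)
    (hineq : ∀ j, N ≤ j → ε * (M j) ^ q ≤ (j : ℝ) * (M j - M (j - 1))) :
    ∀ B : ℝ, ∃ j : ℕ, 1 ≤ j ∧ B < M j := by
  have hMN : 0 < M N := hpos N hN
  have hM_mono : MonotoneOn M (Set.Ici 1) :=
    monotoneOn_nat_Ici_of_le_succ fun n hn => by simpa using hmono (n + 1) (by omega)
  have hstep : ∀ n ≥ N, ε * M N ^ q / (n + 1) ≤ M (n + 1) - M n := by
    intro n hn
    have hpow : M N ^ q ≤ M (n + 1) ^ q :=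
      Real.rpow_le_rpow hMN.le (hM_mono (Set.mem_Ici.2 hN) (Set.mem_Ici.2 (by omega)) (by omega))
        (by linarith)
    have hgrowth := hineq (n + 1) (by omega)
    push_cast at hgrowth
    rw [div_le_iff₀ (by positivity)]
    linarith [mul_le_mul_of_nonneg_left hpow hε.le]
  have hlim := tendsto_atTop_of_le_sub_succ (by positivity) hstep
  intro B
  obtain ⟨j, hj⟩ := ((hlim.eventually_gt_atTop B).and (eventually_ge_atTop 1)).exists
  exact ⟨j, hj.2, hj.1⟩
end

section
/- For any s > 0, the function g_s(λ) = Σ_{m=0}^∞ 1/((1+m)(1+λm)^s) is strictly decreasing in λ on (0, ∞). -/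
/-! Each term of the series is antitone in `λ`, strictly so for `m ≥ 1`, and for `λ > 0` the
series converges by comparison with `∑ (1 + m) ^ (-(1 + s))`. -/

open Real

noncomputable def gsTerm (s lam : ℝ) (m : ℕ) : ℝ := 1 / ((1 + (m : ℝ)) * (1 + lam * m) ^ s)

lemma gsTerm_nonneg (s : ℝ) {lam : ℝ} (hlam : 0 ≤ lam) (m : ℕ) : 0 ≤ gsTerm s lam m := by
  unfold gsTerm; positivity

lemma gsTerm_le_of_le {s a b : ℝ} (hs : 0 ≤ s) (ha : 0 ≤ a) (hab : a ≤ b) (m : ℕ) :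
    gsTerm s b m ≤ gsTerm s a m := by
  unfold gsTerm
  gcongr

lemma gsTerm_lt_of_lt {s a b : ℝ} (hs : 0 < s) (ha : 0 ≤ a) (hab : a < b) {m : ℕ} (hm : m ≠ 0) :
    gsTerm s b m < gsTerm s a m := by
  have hm : (0 : ℝ) < m := by positivity
  unfold gsTerm
  gcongr

lemma summable_one_add_nat_rpow_neg {p : ℝ} (hp : 1 < p) :
    Summable fun m : ℕ => (1 + (m : ℝ)) ^ (-p) := by
  refine ((summable_nat_add_iff 1).mpr (summable_nat_rpow.mpr (neg_lt_neg hp))).congr fun m => ?_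
  push_cast
  rw [add_comm]

lemma gsTerm_le_rpow {s lam : ℝ} (hs : 0 ≤ s) (hlam : 0 < lam) (m : ℕ) :
    gsTerm s lam m ≤ (min lam 1) ^ (-s) * (1 + (m : ℝ)) ^ (-(1 + s)) := by
  set c := min lam 1
  have hc : 0 < c := lt_min hlam one_pos
  have hm : (0 : ℝ) < 1 + m := by positivity
  have hcm : c * (1 + m) ≤ 1 + lam * m := by
    have := min_le_left lam 1; have := min_le_right lam 1
    nlinarith [(Nat.cast_nonneg m : (0 : ℝ) ≤ m)]
  calc gsTerm s lam m ≤ 1 / ((1 + (m : ℝ)) * (c * (1 + m)) ^ s) := by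
        unfold gsTerm; gcongr
    _ = c ^ (-s) * (1 + (m : ℝ)) ^ (-(1 + s)) := by
        rw [mul_rpow hc.le hm.le, rpow_neg hc.le, rpow_neg hm.le, rpow_add hm, rpow_one]
        field_simp

lemma summable_gsTerm {s lam : ℝ} (hs : 0 < s) (hlam : 0 < lam) : Summable (gsTerm s lam) :=
  ((summable_one_add_nat_rpow_neg (lt_add_of_pos_right 1 hs)).mul_left _).of_nonneg_of_le
    (gsTerm_nonneg s hlam.le) (gsTerm_le_rpow hs.le hlam)

theorem gs_strictAntiOn (s : ℝ) (hs : 0 < s) :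
    StrictAntiOn (fun lam : ℝ => ∑' m : ℕ, 1 / ((1 + (m : ℝ)) * (1 + lam * m) ^ s))
      (Set.Ioi (0 : ℝ)) := by
  intro a (ha : 0 < a) b (hb : 0 < b) hab
  exact Summable.tsum_lt_tsum_of_nonneg (i := 1) (gsTerm_nonneg s hb.le)
    (gsTerm_le_of_le hs.le ha.le hab.le) (gsTerm_lt_of_lt hs ha.le hab one_ne_zero)
    (summable_gsTerm hs ha)
end

section
/- Let q̃ ∈ (1,2], N₁ ≥ 1 an integer, and (x_j)_{j ≥ N₁ - 1} a sequence of positive reals satisfying x_{j-1} ≤ x_j (1 - x_j/j)^{q̃-1} with 0 < x_j < j for all j ≥ N₁. Then 1/x_{j-1} ≥ 1/x_j + (q̃-1)/j for all j ≥ N₁; consequently for every k > N₁, 1/x_{N₁-1} ≥ 1/x_k + (q̃-1) Σ_{j=N₁}^{k} 1/j, and no such sequence can exist (since the harmonic sum diverges while the left side is fixed). -/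
/-!
Writing `t = x_j / j`, the recursion gives `1/x_{j-1} ≥ 1/(x_j (1 - t)^p)` with `p = q̃ - 1`, and
`(1 + p t)(1 - t)^p ≤ e^{p t} (e^{-t})^p = 1` turns this into `1/x_{j-1} ≥ 1/x_j + p/j`.
Telescoping bounds `p` times a tail of the harmonic series by the fixed number `1/x_{N₁-1}`,
which is impossible because the harmonic series diverges.
-/

open Filter Finset

theorem one_add_mul_mul_one_sub_rpow_le_one {p t : ℝ} (hp : 0 ≤ p) (ht : t ≤ 1) :
    (1 + p * t) * (1 - t) ^ p ≤ 1 :=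
  calc (1 + p * t) * (1 - t) ^ p
      ≤ Real.exp (p * t) * Real.exp (-t) ^ p := by
        have hexp : 1 + p * t ≤ Real.exp (p * t) := by linarith [Real.add_one_le_exp (p * t)]
        have hbase : 1 - t ≤ Real.exp (-t) := by linarith [Real.add_one_le_exp (-t)]
        gcongr
    _ = 1 := by rw [← Real.exp_mul, ← Real.exp_add]; simp [mul_comm]

theorem one_div_add_div_le_one_div_of_le_mul_one_sub_div_rpow {p a b n : ℝ} (hp : 0 ≤ p)
    (ha : 0 < a) (hb : 0 < b) (han : a ≤ n) (h : b ≤ a * (1 - a / n) ^ p) :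
    1 / a + p / n ≤ 1 / b := by
  have hn : 0 < n := ha.trans_le han
  have hpos : 0 < a * (1 - a / n) ^ p := hb.trans_le h
  have hs : 0 < (1 - a / n) ^ p := pos_of_mul_pos_right hpos ha.le
  calc 1 / a + p / n
      = (1 + p * (a / n)) / a := by field_simp
    _ = (1 + p * (a / n)) * (1 - a / n) ^ p / (a * (1 - a / n) ^ p) :=
        (mul_div_mul_right _ _ hs.ne').symm
    _ ≤ 1 / (a * (1 - a / n) ^ p) := by
        gcongr
        exact one_add_mul_mul_one_sub_rpow_le_one hp ((div_le_one hn).2 han)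
    _ ≤ 1 / b := one_div_le_one_div_of_le hb h

theorem add_sum_Icc_le_of_forall_add_le {α : Type*} [AddCommMonoid α] [PartialOrder α]
    [IsOrderedAddMonoid α] {u c : ℕ → α} {N : ℕ} (h : ∀ j, N ≤ j → u j + c j ≤ u (j - 1))
    {k : ℕ} (hk : N ≤ k) : u k + ∑ j ∈ Icc N k, c j ≤ u (N - 1) := by
  induction k, hk using Nat.le_induction with
  | base => simpa using h N le_rfl
  | succ k hk ih =>
    calc u (k + 1) + ∑ j ∈ Icc N (k + 1), c j
        = (u (k + 1) + c (k + 1)) + ∑ j ∈ Icc N k, c j := by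
          rw [sum_Icc_succ_top (by omega)]; abel
      _ ≤ u k + ∑ j ∈ Icc N k, c j := by gcongr; simpa using h (k + 1) (by omega)
      _ ≤ u (N - 1) := ih

theorem tendsto_sum_Icc_one_div_atTop (N : ℕ) :
    Tendsto (fun k ↦ ∑ j ∈ Icc N k, 1 / (j : ℝ)) atTop atTop := by
  have harmonic : Tendsto (fun n ↦ ∑ j ∈ range n, 1 / (j : ℝ)) atTop atTop :=
    (not_summable_iff_tendsto_nat_atTop_of_nonneg fun _ ↦ by positivity).1
      Real.not_summable_one_div_natCast
  refine (tendsto_atTop_add_const_right _ (-∑ j ∈ range N, 1 / (j : ℝ))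
    (harmonic.comp (tendsto_add_atTop_nat 1))).congr' ?_
  filter_upwards [eventually_ge_atTop N] with k hk
  rw [Function.comp_apply, ← Finset.Ico_add_one_right_eq_Icc, sum_Ico_eq_sub _ (by omega),
    sub_eq_add_neg]

theorem recursive_reciprocal_ineq_and_contradiction_general
    (qt : ℝ) (hq1 : 1 < qt) (N₁ : ℕ)
    (x : ℕ → ℝ)
    (hxpos : ∀ j, N₁ - 1 ≤ j → 0 < x j)
    (hxlt : ∀ j, N₁ ≤ j → x j < (j : ℝ))
    (hrec : ∀ j, N₁ ≤ j → x (j - 1) ≤ x j * (1 - x j / (j : ℝ)) ^ (qt - 1)) :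
    (∀ j, N₁ ≤ j → 1 / x j + (qt - 1) / (j : ℝ) ≤ 1 / x (j - 1)) ∧
    (∀ k, N₁ < k →
      1 / x k + (qt - 1) * ∑ j ∈ Finset.Icc N₁ k, 1 / (j : ℝ) ≤ 1 / x (N₁ - 1)) ∧
    False := by
  have hp : 0 < qt - 1 := sub_pos.2 hq1
  have step (j : ℕ) (hj : N₁ ≤ j) : 1 / x j + (qt - 1) / (j : ℝ) ≤ 1 / x (j - 1) :=
    one_div_add_div_le_one_div_of_le_mul_one_sub_div_rpow hp.le (hxpos j (by omega))
      (hxpos (j - 1) (by omega)) (hxlt j hj).le (hrec j hj)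
  have telescoped (k : ℕ) (hk : N₁ ≤ k) :
      1 / x k + (qt - 1) * ∑ j ∈ Icc N₁ k, 1 / (j : ℝ) ≤ 1 / x (N₁ - 1) := by
    simpa only [mul_sum, mul_one_div] using add_sum_Icc_le_of_forall_add_le step hk
  refine ⟨step, fun k hk ↦ telescoped k hk.le, ?_⟩
  obtain ⟨k, hkN, hk⟩ := ((eventually_ge_atTop N₁).and
    (((tendsto_sum_Icc_one_div_atTop N₁).const_mul_atTop hp).eventually_gt_atTop
      (1 / x (N₁ - 1)))).exists
  have hxk : 0 < 1 / x k := one_div_pos.2 (hxpos k (by omega))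
  linarith [telescoped k hkN]

theorem recursive_reciprocal_ineq_and_contradiction
    (qt : ℝ) (hq1 : 1 < qt) (hq2 : qt ≤ 2) (N₁ : ℕ) (hN₁ : 1 ≤ N₁)
    (x : ℕ → ℝ)
    (hxpos : ∀ j, N₁ - 1 ≤ j → 0 < x j)
    (hxlt : ∀ j, N₁ ≤ j → x j < (j : ℝ))
    (hrec : ∀ j, N₁ ≤ j → x (j - 1) ≤ x j * (1 - x j / (j : ℝ)) ^ (qt - 1)) :
    (∀ j, N₁ ≤ j → 1 / x j + (qt - 1) / (j : ℝ) ≤ 1 / x (j - 1)) ∧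
    (∀ k, N₁ < k →
      1 / x k + (qt - 1) * ∑ j ∈ Finset.Icc N₁ k, 1 / (j : ℝ) ≤ 1 / x (N₁ - 1)) ∧
    False :=
  recursive_reciprocal_ineq_and_contradiction_general qt hq1 N₁ x hxpos hxlt hrec
end
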